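/- For natural numbers n ≥ 1, g ≥ 2, and integers e, h, r with 1 ≤ r ≤ n - 1, 0 ≤ h ≤ e, and 2e ≤ n(g-1) + 1, the following strict inequality holds: e(n - r) - (e - h)(r - 1) - (1/2)(n - r)(n + r + 1)(g - 1) < 0. -/
import Mathlib


/-- Key arithmetic estimate in the dimension count showing a general symplectic
extension admits no non-transversal Lagrangian lifting. -/
theorem stmt_12 (n g e h r : ℤ) (hn : 1 ≤ n) (hg : 2 ≤ g)
    (hr1 : 1 ≤ r) (hr2 : r ≤ n - 1) (hh0 : 0 ≤ h) (hhe : h ≤ e)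
    (he : 2 * e ≤ n * (g - 1) + 1) :
    (e : ℚ) * ((n : ℚ) - (r : ℚ)) - ((e : ℚ) - (h : ℚ)) * ((r : ℚ) - 1)
      - ((n : ℚ) - (r : ℚ)) * ((n : ℚ) + (r : ℚ) + 1) * ((g : ℚ) - 1) / 2 < 0 := by
  have key : 2 * (e * (n - r)) - 2 * ((e - h) * (r - 1)) - (n - r) * (n + r + 1) * (g - 1) < 0 := by
    nlinarith [mul_nonneg (sub_nonneg.2 hhe) (sub_nonneg.2 hr1),
      mul_le_mul_of_nonneg_right he (by linarith : (0:ℤ) ≤ n - r),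
      mul_pos (by linarith : (0:ℤ) < n - r)
        (by nlinarith : (0:ℤ) < (r + 1) * (g - 1) - 1)]
  have keyQ : ((2 * (e * (n - r)) - 2 * ((e - h) * (r - 1)) - (n - r) * (n + r + 1) * (g - 1) : ℤ) : ℚ) < 0 := by
    exact_mod_cast key
  push_cast at keyQ
  linarith
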